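/- arXiv:2411.06210 — 6 statements merged into one kernel-verified Lean document; each statement's English description precedes it below -/
import Mathlib

section
/- In a Mal'tsev category, any internal reflexive graph admits at most one internal category structure. -/
open CategoryTheory CategoryTheory.Limits

universe v u v' u'

variable {C : Type u} [Category.{v} C]

/-- An internal relation on an object `X`: a pair of jointly monic morphisms. -/
structure RelOn (X : C) where
  R : C
  r1 : R ⟶ X
  r2 : R ⟶ X
  jmono : ∀ {Z : C} (f g : Z ⟶ R), f ≫ r1 = g ≫ r1 → f ≫ r2 = g ≫ r2 → f = g

namespace RelOn

variable {X : C} (ρ : RelOn X)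

def Reflexive : Prop :=
  ∃ δ : X ⟶ ρ.R, δ ≫ ρ.r1 = 𝟙 X ∧ δ ≫ ρ.r2 = 𝟙 X

def Symmetric : Prop :=
  ∃ σ : ρ.R ⟶ ρ.R, σ ≫ ρ.r1 = ρ.r2 ∧ σ ≫ ρ.r2 = ρ.r1

/-- Transitivity, formulated with generalized elements. -/
def Transitive : Prop :=
  ∀ {Z : C} (a b : Z ⟶ ρ.R), a ≫ ρ.r2 = b ≫ ρ.r1 →
    ∃ t : Z ⟶ ρ.R, t ≫ ρ.r1 = a ≫ ρ.r1 ∧ t ≫ ρ.r2 = b ≫ ρ.r2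

def IsEquivalence : Prop := ρ.Reflexive ∧ ρ.Symmetric ∧ ρ.Transitive

/-- The relation is effective: it is the kernel pair of some morphism. -/
def Effective : Prop :=
  ∃ (Y : C) (f : X ⟶ Y) (h : ρ.r1 ≫ f = ρ.r2 ≫ f),
    Nonempty (IsLimit (PullbackCone.mk ρ.r1 ρ.r2 h))

end RelOn

/-- A Mal'tsev category: every internal reflexive relation is an equivalence relation. -/
class MaltsevCat (C : Type u) [Category.{v} C] : Prop where
  refl_is_equiv : ∀ {X : C} (ρ : RelOn X), ρ.Reflexive → ρ.Symmetric ∧ ρ.Transitive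

/-- A regular category: finitely complete, coequalizers of kernel pairs,
pullback-stable regular epimorphisms. -/
class RegularCat (C : Type u) [Category.{v} C] : Prop where
  hasFiniteLimits : HasFiniteLimits C
  hasCoeqOfKernelPair : ∀ {A B R : C} (f : A ⟶ B) (p1 p2 : R ⟶ A) (h : p1 ≫ f = p2 ≫ f),
    Nonempty (IsLimit (PullbackCone.mk p1 p2 h)) → HasCoequalizer p1 p2
  regEpiStable : ∀ {P A B Z : C} (f : A ⟶ B) (g : Z ⟶ B) (p1 : P ⟶ A) (p2 : P ⟶ Z)
    (h : p1 ≫ f = p2 ≫ g), Nonempty (IsLimit (PullbackCone.mk p1 p2 h)) →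
    Nonempty (RegularEpi f) → Nonempty (RegularEpi p2)

/-- A Barr-exact category: regular and every equivalence relation is effective. -/
class ExactCat (C : Type u) [Category.{v} C] extends RegularCat C : Prop where
  effective : ∀ {X : C} (ρ : RelOn X), ρ.IsEquivalence → ρ.Effective

/-- An internal reflexive graph. -/
structure ReflexiveGraph (C : Type u) [Category.{v} C] where
  C1 : C
  C0 : C
  d : C1 ⟶ C0
  c : C1 ⟶ C0
  e : C0 ⟶ C1
  ed : e ≫ d = 𝟙 C0
  ec : e ≫ c = 𝟙 C0

/-- An internal category structure on a reflexive graph, formulated via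
generalized elements (equivalent to the usual pullback formulation in a
finitely complete category). `comp a b _` is the composite "`a` followed by `b`". -/
structure CatStruct {C : Type u} [Category.{v} C] (G : ReflexiveGraph C) where
  comp : ∀ {Z : C} (a b : Z ⟶ G.C1), a ≫ G.c = b ≫ G.d → (Z ⟶ G.C1)
  comp_natural : ∀ {W Z : C} (w : W ⟶ Z) (a b : Z ⟶ G.C1) (h : a ≫ G.c = b ≫ G.d)
      (h' : (w ≫ a) ≫ G.c = (w ≫ b) ≫ G.d),
      w ≫ comp a b h = comp (w ≫ a) (w ≫ b) h'
  comp_d : ∀ {Z : C} (a b : Z ⟶ G.C1) (h : a ≫ G.c = b ≫ G.d), comp a b h ≫ G.d = a ≫ G.d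
  comp_c : ∀ {Z : C} (a b : Z ⟶ G.C1) (h : a ≫ G.c = b ≫ G.d), comp a b h ≫ G.c = b ≫ G.c
  comp_unit_l : ∀ {Z : C} (a : Z ⟶ G.C1) (h : (a ≫ G.d ≫ G.e) ≫ G.c = a ≫ G.d),
      comp (a ≫ G.d ≫ G.e) a h = a
  comp_unit_r : ∀ {Z : C} (a : Z ⟶ G.C1) (h : a ≫ G.c = (a ≫ G.c ≫ G.e) ≫ G.d),
      comp a (a ≫ G.c ≫ G.e) h = a
  comp_assoc : ∀ {Z : C} (a b c' : Z ⟶ G.C1) (h1 : a ≫ G.c = b ≫ G.d)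
      (h2 : b ≫ G.c = c' ≫ G.d)
      (h3 : comp a b h1 ≫ G.c = c' ≫ G.d)
      (h4 : a ≫ G.c = comp b c' h2 ≫ G.d),
      comp (comp a b h1) c' h3 = comp a (comp b c' h2) h4

/-- The internal category has inverses, i.e. is an internal groupoid. -/
def CatStruct.HasInverses {C : Type u} [Category.{v} C] {G : ReflexiveGraph C}
    (S : CatStruct G) : Prop :=
  ∃ i : G.C1 ⟶ G.C1, i ≫ G.d = G.c ∧ i ≫ G.c = G.d ∧
    (∀ {Z : C} (a : Z ⟶ G.C1) (h : a ≫ G.c = (a ≫ i) ≫ G.d),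
      S.comp a (a ≫ i) h = a ≫ G.d ≫ G.e) ∧
    (∀ {Z : C} (a : Z ⟶ G.C1) (h : (a ≫ i) ≫ G.c = a ≫ G.d),
      S.comp (a ≫ i) a h = a ≫ G.c ≫ G.e)

/-- An internal groupoid. -/
structure GroupoidObj (C : Type u) [Category.{v} C] where
  graph : ReflexiveGraph C
  str : CatStruct graph
  hasInv : str.HasInverses

/-- Internal functors between internal groupoids. -/
@[ext]
structure GrpdHom (A B : GroupoidObj C) where
  f0 : A.graph.C0 ⟶ B.graph.C0
  f1 : A.graph.C1 ⟶ B.graph.C1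
  hd : f1 ≫ B.graph.d = A.graph.d ≫ f0
  hc : f1 ≫ B.graph.c = A.graph.c ≫ f0
  he : A.graph.e ≫ f1 = f0 ≫ B.graph.e
  hm : ∀ {Z : C} (a b : Z ⟶ A.graph.C1) (h : a ≫ A.graph.c = b ≫ A.graph.d)
      (h' : (a ≫ f1) ≫ B.graph.c = (b ≫ f1) ≫ B.graph.d),
      A.str.comp a b h ≫ f1 = B.str.comp (a ≫ f1) (b ≫ f1) h'

lemma GrpdHom.cond {A B : GroupoidObj C} (f : GrpdHom A B) {Z : C} {a b : Z ⟶ A.graph.C1}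
    (h : a ≫ A.graph.c = b ≫ A.graph.d) :
    (a ≫ f.f1) ≫ B.graph.c = (b ≫ f.f1) ≫ B.graph.d := by
  rw [Category.assoc, f.hc, Category.assoc, f.hd, ← Category.assoc, h, Category.assoc]

def GrpdHom.id (A : GroupoidObj C) : GrpdHom A A where
  f0 := 𝟙 _
  f1 := 𝟙 _
  hd := by simp
  hc := by simp
  he := by simp
  hm := by intros; simp

def GrpdHom.comp {A B D : GroupoidObj C} (f : GrpdHom A B) (g : GrpdHom B D) : GrpdHom A D where
  f0 := f.f0 ≫ g.f0
  f1 := f.f1 ≫ g.f1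
  hd := by rw [Category.assoc, g.hd, ← Category.assoc, f.hd, Category.assoc]
  hc := by rw [Category.assoc, g.hc, ← Category.assoc, f.hc, Category.assoc]
  he := by rw [← Category.assoc, f.he, Category.assoc, g.he, ← Category.assoc]
  hm := by
    intro Z a b h h'
    rw [← Category.assoc, f.hm a b h (f.cond h), g.hm _ _ (f.cond h) (g.cond (f.cond h))]
    simp only [Category.assoc]

instance : Category (GroupoidObj C) where
  Hom := GrpdHom
  id := GrpdHom.id
  comp := GrpdHom.comp
  id_comp f := by apply GrpdHom.ext <;> simp [GrpdHom.comp, GrpdHom.id]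
  comp_id f := by apply GrpdHom.ext <;> simp [GrpdHom.comp, GrpdHom.id]
  assoc f g h := by apply GrpdHom.ext <;> simp [GrpdHom.comp]

/-- Coerce a morphism of internal groupoids to its underlying data. -/
def homToGrpdHom {A B : GroupoidObj C} (f : A ⟶ B) : GrpdHom A B := f

/-- Morphisms of reflexive graphs. -/
@[ext]
structure RGHom (A B : ReflexiveGraph C) where
  f0 : A.C0 ⟶ B.C0
  f1 : A.C1 ⟶ B.C1
  hd : f1 ≫ B.d = A.d ≫ f0
  hc : f1 ≫ B.c = A.c ≫ f0
  he : A.e ≫ f1 = f0 ≫ B.e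

instance : Category (ReflexiveGraph C) where
  Hom := RGHom
  id A := ⟨𝟙 _, 𝟙 _, by simp, by simp, by simp⟩
  comp f g := ⟨f.f0 ≫ g.f0, f.f1 ≫ g.f1,
    by rw [Category.assoc, g.hd, ← Category.assoc, f.hd, Category.assoc],
    by rw [Category.assoc, g.hc, ← Category.assoc, f.hc, Category.assoc],
    by rw [← Category.assoc, f.he, Category.assoc, g.he, ← Category.assoc]⟩
  id_comp f := by apply RGHom.ext <;> simp
  comp_id f := by apply RGHom.ext <;> simp
  assoc f g h := by apply RGHom.ext <;> simp

def homToRGHom {A B : ReflexiveGraph C} (f : A ⟶ B) : RGHom A B := f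

/-- The forgetful functor from internal groupoids to reflexive graphs. -/
def forgetToRG (C : Type u) [Category.{v} C] : GroupoidObj C ⥤ ReflexiveGraph C where
  obj A := A.graph
  map f := ⟨(homToGrpdHom f).f0, (homToGrpdHom f).f1, (homToGrpdHom f).hd,
    (homToGrpdHom f).hc, (homToGrpdHom f).he⟩
  map_id A := by apply RGHom.ext <;> rfl
  map_comp f g := by apply RGHom.ext <;> rfl

/-- A discrete internal groupoid: the unit is an isomorphism. -/
def GroupoidObj.IsDiscrete (A : GroupoidObj C) : Prop := IsIso A.graph.e

/-- An internal double groupoid (an internal groupoid in internal groupoids) is a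
2-groupoid when its groupoid of objects is discrete. -/
def Is2Grpd (D : GroupoidObj (GroupoidObj C)) : Prop := D.graph.C0.IsDiscrete

/-- Zero morphisms, defined without extra structure: morphisms factoring through a
zero object. -/
def IsZeroMor {A B : C} (f : A ⟶ B) : Prop :=
  ∃ (Z : C) (_ : IsZero Z) (g : A ⟶ Z) (h : Z ⟶ B), f = g ≫ h

/-- `κ` is a kernel of `α`. -/
def IsKernelOf {A B K : C} (κ : K ⟶ A) (α : A ⟶ B) : Prop :=
  IsZeroMor (κ ≫ α) ∧ ∀ {Z : C} (g : Z ⟶ A), IsZeroMor (g ≫ α) → ∃! l : Z ⟶ K, l ≫ κ = g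

/-- A split extension with kernel object `Xo`. -/
structure SplitExtOn (Xo : C) where
  A : C
  B : C
  κ : Xo ⟶ A
  α : A ⟶ B
  β : B ⟶ A
  split : β ≫ α = 𝟙 B
  ker : IsKernelOf κ α

/-- A generic split extension with kernel `Xo`: terminal among split extensions
with kernel `Xo` (morphisms being the identity on the kernel). -/
def IsGenericSplitExt {Xo : C} (E : SplitExtOn Xo) : Prop :=
  ∀ E' : SplitExtOn Xo, ∃! vw : (E'.A ⟶ E.A) × (E'.B ⟶ E.B),
    E'.κ ≫ vw.1 = E.κ ∧ vw.1 ≫ E.α = E'.α ≫ vw.2 ∧ E'.β ≫ vw.1 = vw.2 ≫ E.β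

/-- Action representability: every object admits a generic split extension. -/
def ActionRepresentable (C : Type u) [Category.{v} C] : Prop :=
  ∀ X : C, ∃ E : SplitExtOn X, IsGenericSplitExt E

/-- A protoadditive functor: preserves kernels of split epimorphisms. -/
def Protoadditive {X : Type u'} [Category.{v'} X] (H : X ⥤ C) : Prop :=
  ∀ {A B K : X} (α : A ⟶ B) (β : B ⟶ A), β ≫ α = 𝟙 B →
    ∀ (κ : K ⟶ A), IsKernelOf κ α → IsKernelOf (H.map κ) (H.map α)

/-- A semi-abelian category: pointed, Barr-exact, protomodular (split short five
lemma), with binary coproducts. -/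
class SemiAbelian (C : Type u) [Category.{v} C] extends ExactCat C : Prop where
  hasZeroObject : HasZeroObject C
  hasBinaryCoproducts : HasBinaryCoproducts C
  ssfl : ∀ {A B B' Co : C} (k : A ⟶ B) (p : B ⟶ Co) (s : Co ⟶ B)
      (k' : A ⟶ B') (p' : B' ⟶ Co) (s' : Co ⟶ B') (b : B ⟶ B'),
      s ≫ p = 𝟙 Co → s' ≫ p' = 𝟙 Co → IsKernelOf k p → IsKernelOf k' p' →
      k ≫ b = k' → b ≫ p' = p → s ≫ b = s' → IsIso b

/-- A natural Mal'tsev operation on a category with binary products. -/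
def IsNaturallyMaltsev (C : Type u) [Category.{v} C] [HasBinaryProducts C] : Prop :=
  ∃ p : ∀ A : C, (A ⨯ A) ⨯ A ⟶ A,
    (∀ {A B : C} (f : A ⟶ B), prod.map (prod.map f f) f ≫ p B = p A ≫ f) ∧
    (∀ A : C, prod.lift (prod.lift prod.fst prod.snd) prod.snd ≫ p A
        = (prod.fst : A ⨯ A ⟶ A)) ∧
    (∀ A : C, prod.lift (prod.lift prod.fst prod.fst) prod.snd ≫ p A
        = (prod.snd : A ⨯ A ⟶ A))

/-!
By the unit laws, two internal category structures on `G` have composites that agree on the pairs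
`(a, 1)`, `(1, 1)` and `(1, b)`, for `a`, `b` composable. The composable pairs on which they agree
form a relation from `C₁` to `C₁`, and every relation `R` in a Mal'tsev category is difunctional:
`x R y`, `x' R y` and `x' R y'` imply `x R y'`. Indeed, the relation on `R` relating `(x, y)` to
`(x', y')` when `x R y'` is reflexive, hence symmetric and transitive. So the two composites agree
on `(a, b)`.
-/

section Difunctional

variable [HasPullbacks C] [HasBinaryProducts C] {R X Y : C} (r₁ : R ⟶ X) (r₂ : R ⟶ Y)

noncomputable def zigzagFst : pullback (prod.map r₁ r₂) (prod.lift r₁ r₂) ⟶ R :=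
  pullback.fst _ _ ≫ prod.fst

noncomputable def zigzagSnd : pullback (prod.map r₁ r₂) (prod.lift r₁ r₂) ⟶ R :=
  pullback.fst _ _ ≫ prod.snd

lemma pullback_snd_comp_eq_zigzagFst_comp :
    pullback.snd (prod.map r₁ r₂) (prod.lift r₁ r₂) ≫ r₁ = zigzagFst r₁ r₂ ≫ r₁ := by
  have h := pullback.condition (f := prod.map r₁ r₂) (g := prod.lift r₁ r₂) =≫ prod.fst
  simp only [Category.assoc, prod.map_fst, prod.lift_fst] at h
  rw [zigzagFst, Category.assoc, h]

lemma pullback_snd_comp_eq_zigzagSnd_comp :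
    pullback.snd (prod.map r₁ r₂) (prod.lift r₁ r₂) ≫ r₂ = zigzagSnd r₁ r₂ ≫ r₂ := by
  have h := pullback.condition (f := prod.map r₁ r₂) (g := prod.lift r₁ r₂) =≫ prod.snd
  simp only [Category.assoc, prod.map_snd, prod.lift_snd] at h
  rw [zigzagSnd, Category.assoc, h]

lemma exists_lift_zigzag {Z : C} (x y w : Z ⟶ R) (h₁ : w ≫ r₁ = x ≫ r₁) (h₂ : w ≫ r₂ = y ≫ r₂) :
    ∃ t : Z ⟶ pullback (prod.map r₁ r₂) (prod.lift r₁ r₂),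
      t ≫ zigzagFst r₁ r₂ = x ∧ t ≫ zigzagSnd r₁ r₂ = y :=
  ⟨pullback.lift (prod.lift x y) w (by ext <;> simp [h₁, h₂]),
    by rw [zigzagFst, pullback.lift_fst_assoc, prod.lift_fst],
    by rw [zigzagSnd, pullback.lift_fst_assoc, prod.lift_snd]⟩

variable {r₁ r₂}

lemma zigzag_jointly_mono
    (hr : ∀ {Z : C} (f g : Z ⟶ R), f ≫ r₁ = g ≫ r₁ → f ≫ r₂ = g ≫ r₂ → f = g)
    {Z : C} (f g : Z ⟶ pullback (prod.map r₁ r₂) (prod.lift r₁ r₂))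
    (h₁ : f ≫ zigzagFst r₁ r₂ = g ≫ zigzagFst r₁ r₂)
    (h₂ : f ≫ zigzagSnd r₁ r₂ = g ≫ zigzagSnd r₁ r₂) : f = g := by
  have hfst : f ≫ pullback.fst _ _ = g ≫ pullback.fst _ _ := by
    ext
    · simpa [zigzagFst] using h₁
    · simpa [zigzagSnd] using h₂
  refine pullback.hom_ext hfst (hr _ _ ?_ ?_)
  · simp only [Category.assoc, pullback_snd_comp_eq_zigzagFst_comp, zigzagFst, reassoc_of% hfst]
  · simp only [Category.assoc, pullback_snd_comp_eq_zigzagSnd_comp, zigzagSnd, reassoc_of% hfst]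

theorem MaltsevCat.difunctional [MaltsevCat C]
    (hr : ∀ {Z : C} (f g : Z ⟶ R), f ≫ r₁ = g ≫ r₁ → f ≫ r₂ = g ≫ r₂ → f = g)
    {Z : C} (u v w : Z ⟶ R) (huv : u ≫ r₂ = v ≫ r₂) (hvw : v ≫ r₁ = w ≫ r₁) :
    ∃ t : Z ⟶ R, t ≫ r₁ = u ≫ r₁ ∧ t ≫ r₂ = w ≫ r₂ := by
  let ρ : RelOn R := ⟨_, zigzagFst r₁ r₂, zigzagSnd r₁ r₂, zigzag_jointly_mono hr⟩
  have hrefl : ρ.Reflexive := exists_lift_zigzag r₁ r₂ (𝟙 R) (𝟙 R) (𝟙 R) rfl rfl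
  obtain ⟨⟨σ, hσ₁, hσ₂⟩, htrans⟩ := MaltsevCat.refl_is_equiv ρ hrefl
  obtain ⟨p, hp₁, hp₂⟩ := exists_lift_zigzag r₁ r₂ u v u rfl huv
  obtain ⟨q, hq₁, hq₂⟩ := exists_lift_zigzag r₁ r₂ w v v hvw rfl
  obtain ⟨s, hs₁, hs₂⟩ :=
    htrans p (q ≫ σ) (by rw [Category.assoc, hσ₁]; exact hp₂.trans hq₂.symm)
  dsimp only [ρ] at hσ₂ hs₁ hs₂
  refine ⟨s ≫ pullback.snd _ _, ?_, ?_⟩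
  · rw [Category.assoc, pullback_snd_comp_eq_zigzagFst_comp, reassoc_of% hs₁, reassoc_of% hp₁]
  · rw [Category.assoc, pullback_snd_comp_eq_zigzagSnd_comp, reassoc_of% hs₂, reassoc_of% hσ₂,
      reassoc_of% hq₁]

end Difunctional

lemma CatStruct.ext_of_comp {G : ReflexiveGraph C} {S S' : CatStruct G}
    (h : ∀ {Z : C} (a b : Z ⟶ G.C1) (hab : a ≫ G.c = b ≫ G.d), S.comp a b hab = S'.comp a b hab) :
    S = S' := by
  obtain ⟨comp, _, _, _, _, _, _⟩ := S
  obtain ⟨comp', _, _, _, _, _, _⟩ := S'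
  obtain rfl : @comp = @comp' := by
    funext Z a b hab
    exact h a b hab
  rfl

namespace CatStruct

variable [HasPullbacks C] {G : ReflexiveGraph C}

noncomputable def compMap (S : CatStruct G) : pullback G.c G.d ⟶ G.C1 :=
  S.comp (pullback.fst _ _) (pullback.snd _ _) pullback.condition

lemma comp_eq_lift_compMap (S : CatStruct G) {Z : C} (a b : Z ⟶ G.C1)
    (h : a ≫ G.c = b ≫ G.d) : S.comp a b h = pullback.lift a b h ≫ S.compMap := by
  rw [compMap,
    S.comp_natural _ _ _ _ (by rw [Category.assoc, Category.assoc, pullback.condition])]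
  congr 1 <;> simp [pullback.lift_fst, pullback.lift_snd]

variable [HasEqualizers C] (S S' : CatStruct G)

noncomputable def agreeFst : equalizer S.compMap S'.compMap ⟶ G.C1 :=
  equalizer.ι _ _ ≫ pullback.fst _ _

noncomputable def agreeSnd : equalizer S.compMap S'.compMap ⟶ G.C1 :=
  equalizer.ι _ _ ≫ pullback.snd _ _

lemma agree_jointly_mono {Z : C} (f g : Z ⟶ equalizer S.compMap S'.compMap)
    (h₁ : f ≫ agreeFst S S' = g ≫ agreeFst S S') (h₂ : f ≫ agreeSnd S S' = g ≫ agreeSnd S S') :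
    f = g :=
  (cancel_mono (equalizer.ι _ _)).1 <|
    pullback.hom_ext (by simpa [agreeFst] using h₁) (by simpa [agreeSnd] using h₂)

lemma exists_agree_of_comp_eq {Z : C} (a b : Z ⟶ G.C1) (h : a ≫ G.c = b ≫ G.d)
    (hab : S.comp a b h = S'.comp a b h) :
    ∃ w : Z ⟶ equalizer S.compMap S'.compMap, w ≫ agreeFst S S' = a ∧ w ≫ agreeSnd S S' = b := by
  rw [comp_eq_lift_compMap, comp_eq_lift_compMap] at hab
  exact ⟨equalizer.lift _ hab, by simp [agreeFst, pullback.lift_fst],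
    by simp [agreeSnd, pullback.lift_snd]⟩

lemma comp_eq_of_agree {Z : C} (a b : Z ⟶ G.C1) (h : a ≫ G.c = b ≫ G.d)
    (w : Z ⟶ equalizer S.compMap S'.compMap) (ha : w ≫ agreeFst S S' = a)
    (hb : w ≫ agreeSnd S S' = b) : S.comp a b h = S'.comp a b h := by
  have hw : w ≫ equalizer.ι _ _ = pullback.lift a b h := by
    ext
    · simpa [agreeFst, pullback.lift_fst] using ha
    · simpa [agreeSnd, pullback.lift_snd] using hb
  rw [comp_eq_lift_compMap, comp_eq_lift_compMap, ← hw, Category.assoc, Category.assoc,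
    equalizer.condition]

theorem comp_eq_comp [HasBinaryProducts C] [MaltsevCat C] {Z : C} (a b : Z ⟶ G.C1)
    (h : a ≫ G.c = b ≫ G.d) :
    S.comp a b h = S'.comp a b h := by
  have hunitl : ∀ x : Z ⟶ G.C1, (x ≫ G.d ≫ G.e) ≫ G.c = x ≫ G.d := fun x => by
    simp [G.ec]
  have hunitr : a ≫ G.c = (a ≫ G.c ≫ G.e) ≫ G.d := by simp [G.ed]
  obtain ⟨u, hu₁, hu₂⟩ := exists_agree_of_comp_eq S S' a (a ≫ G.c ≫ G.e) hunitr
    (by rw [S.comp_unit_r, S'.comp_unit_r])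
  obtain ⟨v, hv₁, hv₂⟩ := exists_agree_of_comp_eq S S' _ (a ≫ G.c ≫ G.e) (hunitl _)
    (by rw [S.comp_unit_l, S'.comp_unit_l])
  obtain ⟨w, hw₁, hw₂⟩ := exists_agree_of_comp_eq S S' _ b (hunitl b)
    (by rw [S.comp_unit_l, S'.comp_unit_l])
  obtain ⟨t, ht₁, ht₂⟩ := MaltsevCat.difunctional (agree_jointly_mono S S') u v w
    (by rw [hu₂, hv₂]) (by rw [hv₁, hw₁]; simp [reassoc_of% G.ed, reassoc_of% h])
  exact comp_eq_of_agree S S' a b h t (by rw [ht₁, hu₁]) (by rw [ht₂, hw₂])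

end CatStruct

/-- In a Mal'tsev category, any internal reflexive graph admits at most
one internal category structure. -/
theorem stmt1 {C : Type u} [Category.{v} C] [HasFiniteLimits C] [MaltsevCat C]
    (G : ReflexiveGraph C) (S S' : CatStruct G) : S = S' :=
  CatStruct.ext_of_comp (S.comp_eq_comp S')
end

section
/- In a Mal'tsev category, every internal category is an internal groupoid. -/
open CategoryTheory CategoryTheory.Limits

universe v u v' u'

variable {C : Type u} [Category.{v} C]

/-!
In a Mal'tsev category every reflexive relation is symmetric, hence every jointly monic span is
difunctional. Difunctionality of the span `(a, b) ↦ ((a, a b), b)` gives left cancellation, so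
relating an arrow `a` to all composites `a b` is a relation on `C₁`. It is reflexive (`a = a 1`),
and its symmetry applied to `1 ~ a` produces `ā` with `a ā = 1`. A category in which every arrow
has a right inverse is a groupoid, since then the right inverse of `ā` is `a` itself.
-/

namespace MaltsevCat

variable [HasPullbacks C] {X Y R : C} (r₁ : R ⟶ X) (r₂ : R ⟶ Y)

/-- The relation on `R` relating `u` and `v` when `u r₁ = w r₁` and `w r₂ = v r₂` for some `w`,
realised on triples `((u, w), v)`; joint monicity of `(r₁, r₂)` makes `w` unique. -/
noncomputable abbrev zigzagRel
    (jm : ∀ {Z : C} (f g : Z ⟶ R), f ≫ r₁ = g ≫ r₁ → f ≫ r₂ = g ≫ r₂ → f = g) : RelOn R where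
  R := pullback (pullback.snd r₁ r₁ ≫ r₂) r₂
  r1 := pullback.fst _ _ ≫ pullback.fst r₁ r₁
  r2 := pullback.snd _ _
  jmono f g h₁ h₂ := by
    have hw : (f ≫ pullback.fst _ _) ≫ pullback.snd r₁ r₁ =
        (g ≫ pullback.fst _ _) ≫ pullback.snd r₁ r₁ := by
      apply jm
      · simp only [Category.assoc, ← pullback.condition]
        simp only [← Category.assoc, h₁]
      · simp only [Category.assoc, pullback.condition]
        simp only [← Category.assoc, h₂]
    refine pullback.hom_ext (pullback.hom_ext ?_ hw) h₂
    simpa only [Category.assoc] using h₁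

theorem zigzagRel_reflexive
    (jm : ∀ {Z : C} (f g : Z ⟶ R), f ≫ r₁ = g ≫ r₁ → f ≫ r₂ = g ≫ r₂ → f = g) :
    (zigzagRel r₁ r₂ jm).Reflexive :=
  ⟨pullback.lift (pullback.lift (𝟙 R) (𝟙 R) rfl) (𝟙 R) (by simp [pullback.lift_snd_assoc]),
    by simp [pullback.lift_fst_assoc, pullback.lift_fst], by simp [zigzagRel, pullback.lift_snd]⟩

theorem difunctional_s2 [MaltsevCat C]
    (jm : ∀ {Z : C} (f g : Z ⟶ R), f ≫ r₁ = g ≫ r₁ → f ≫ r₂ = g ≫ r₂ → f = g)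
    {Z : C} {u v w : Z ⟶ R} (hwu : w ≫ r₁ = u ≫ r₁) (hwv : w ≫ r₂ = v ≫ r₂) :
    ∃ t : Z ⟶ R, t ≫ r₁ = v ≫ r₁ ∧ t ≫ r₂ = u ≫ r₂ := by
  obtain ⟨σ, hσ₁, hσ₂⟩ := (refl_is_equiv _ (zigzagRel_reflexive r₁ r₂ jm)).1
  let uwv : Z ⟶ (zigzagRel r₁ r₂ jm).R :=
    pullback.lift (pullback.lift u w hwu.symm) v (by rw [pullback.lift_snd_assoc, hwv])
  refine ⟨uwv ≫ σ ≫ pullback.fst _ _ ≫ pullback.snd r₁ r₁, ?_, ?_⟩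
  · have := uwv ≫= hσ₁ =≫ r₁
    simp only [zigzagRel, Category.assoc] at this
    simp only [Category.assoc, ← pullback.condition, this, uwv, pullback.lift_snd_assoc]
  · have := uwv ≫= hσ₂ =≫ r₂
    simp only [zigzagRel, Category.assoc] at this
    simp only [Category.assoc, pullback.condition, this, uwv, pullback.lift_fst_assoc]

end MaltsevCat

namespace CatStruct

variable {G : ReflexiveGraph C} (S : CatStruct G)

theorem comp_congr {Z : C} {a a' b b' : Z ⟶ G.C1} (ha : a = a') (hb : b = b')
    (h : a ≫ G.c = b ≫ G.d) (h' : a' ≫ G.c = b' ≫ G.d) : S.comp a b h = S.comp a' b' h' := by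
  subst ha hb
  rfl

theorem comp_eq_of_eq_unit_left {Z : C} {u a : Z ⟶ G.C1} (hu : u = a ≫ G.d ≫ G.e)
    (h : u ≫ G.c = a ≫ G.d) : S.comp u a h = a := by
  subst hu
  exact S.comp_unit_l a h

theorem comp_eq_of_eq_unit_right {Z : C} {a u : Z ⟶ G.C1} (hu : u = a ≫ G.c ≫ G.e)
    (h : a ≫ G.c = u ≫ G.d) : S.comp a u h = a := by
  subst hu
  exact S.comp_unit_r a h

section RightInverse

variable {i : G.C1 ⟶ G.C1} (hd : i ≫ G.d = G.c) (hc : i ≫ G.c = G.d)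
  (hr : ∀ {Z : C} (a : Z ⟶ G.C1) (h : a ≫ G.c = (a ≫ i) ≫ G.d),
    S.comp a (a ≫ i) h = a ≫ G.d ≫ G.e)
include hd hc hr

/-- With `ā := a ≫ i` and `ā' := ā ≫ i`: `a = a (ā ā') = (a ā) ā' = ā'`. -/
theorem rightInverse_rightInverse {Z : C} (a : Z ⟶ G.C1) : (a ≫ i) ≫ i = a := by
  have h₁ : a ≫ G.c = (a ≫ i) ≫ G.d := by simp [hd]
  have h₂ : (a ≫ i) ≫ G.c = ((a ≫ i) ≫ i) ≫ G.d := by simp [hd]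
  calc (a ≫ i) ≫ i
      = S.comp (a ≫ G.d ≫ G.e) ((a ≫ i) ≫ i) (by simp [G.ec, hd, hc]) :=
        (S.comp_eq_of_eq_unit_left (by simp [reassoc_of% hd, reassoc_of% hc]) _).symm
    _ = S.comp (S.comp a (a ≫ i) h₁) ((a ≫ i) ≫ i) (by simp [S.comp_c, hc, hd]) :=
        S.comp_congr (hr a h₁).symm rfl _ _
    _ = S.comp a (S.comp (a ≫ i) ((a ≫ i) ≫ i) h₂) (by simp [S.comp_d, hd]) :=
        S.comp_assoc _ _ _ _ _ _ _
    _ = a := S.comp_eq_of_eq_unit_right (by rw [hr]; simp [reassoc_of% hd]) _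

theorem hasInverses_of_rightInverse : S.HasInverses := by
  refine ⟨i, hd, hc, hr, fun a h => ?_⟩
  calc S.comp (a ≫ i) a h
      = S.comp (a ≫ i) ((a ≫ i) ≫ i) (by simp [hc, hd]) :=
        S.comp_congr rfl (S.rightInverse_rightInverse hd hc hr a).symm _ _
    _ = a ≫ G.c ≫ G.e := by rw [hr]; simp [reassoc_of% hd]

end RightInverse

section Composable

variable [HasPullbacks C]

noncomputable def compHom : pullback G.c G.d ⟶ G.C1 :=
  S.comp (pullback.fst _ _) (pullback.snd _ _) pullback.condition

theorem comp_compHom {Z : C} (t : Z ⟶ pullback G.c G.d) :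
    t ≫ S.compHom = S.comp (t ≫ pullback.fst _ _) (t ≫ pullback.snd _ _)
      (by simp [pullback.condition]) :=
  S.comp_natural t _ _ _ _

theorem lift_compHom {Z : C} (a b : Z ⟶ G.C1) (h : a ≫ G.c = b ≫ G.d) :
    pullback.lift a b h ≫ S.compHom = S.comp a b h := by
  rw [comp_compHom]
  exact S.comp_congr (pullback.lift_fst _ _ _) (pullback.lift_snd _ _ _) _ _

/-- In the difunctional span `(a, b) ↦ ((a, a b), b)` the pairs `(a, b)`, `(1, b')`, `(a, b')`
form a zigzag, which yields the pair `(1, b)` with `1 b = b'`. -/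
theorem cancel_left [HasBinaryProducts C] [MaltsevCat C] {Z : C} {a b b' : Z ⟶ G.C1}
    (h : a ≫ G.c = b ≫ G.d) (h' : a ≫ G.c = b' ≫ G.d) (hab : S.comp a b h = S.comp a b' h') :
    b = b' := by
  have hdb : b ≫ G.d = b' ≫ G.d := h.symm.trans h'
  have hb : (b ≫ G.d ≫ G.e) ≫ G.c = b' ≫ G.d := by simp [G.ec, hdb]
  obtain ⟨t, ht₁, ht₂⟩ := MaltsevCat.difunctional_s2 (prod.lift (pullback.fst _ _) S.compHom)
    (pullback.snd G.c G.d)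
    (fun f g h₁ h₂ => pullback.hom_ext (by simpa [prod.lift_fst] using h₁ =≫ prod.fst) h₂)
    (u := pullback.lift a b h) (v := pullback.lift (b ≫ G.d ≫ G.e) b' hb)
    (w := pullback.lift a b' h')
    (by ext <;> simp [prod.lift_fst, prod.lift_snd, pullback.lift_fst, lift_compHom, hab])
    (by simp [pullback.lift_snd])
  have ht_fst : t ≫ pullback.fst _ _ = b ≫ G.d ≫ G.e := by
    simpa [prod.lift_fst, pullback.lift_fst] using ht₁ =≫ prod.fst
  have ht_compHom : t ≫ S.compHom = b' := by
    simpa [prod.lift_snd, lift_compHom,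
      S.comp_eq_of_eq_unit_left (by simp [reassoc_of% hdb]) hb] using ht₁ =≫ prod.snd
  have ht_snd : t ≫ pullback.snd _ _ = b := by simpa [pullback.lift_snd] using ht₂
  calc b = t ≫ pullback.snd _ _ := ht_snd.symm
    _ = S.comp (t ≫ pullback.fst _ _) (t ≫ pullback.snd _ _) (by simp [pullback.condition]) :=
        (S.comp_eq_of_eq_unit_left (by rw [ht_fst, ht_snd]) _).symm
    _ = b' := by rw [← comp_compHom, ht_compHom]

variable [HasBinaryProducts C] [MaltsevCat C]

noncomputable abbrev prefixRel : RelOn G.C1 where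
  R := pullback G.c G.d
  r1 := pullback.fst _ _
  r2 := S.compHom
  jmono f g h₁ h₂ := by
    refine pullback.hom_ext h₁ (S.cancel_left (a := f ≫ pullback.fst _ _)
      (by simp [pullback.condition]) (by simp [h₁, pullback.condition]) ?_)
    rw [← comp_compHom, h₂, comp_compHom]
    exact S.comp_congr h₁.symm rfl _ _

theorem prefixRel_reflexive : S.prefixRel.Reflexive :=
  ⟨pullback.lift (𝟙 G.C1) (G.c ≫ G.e) (by simp [G.ed]), pullback.lift_fst _ _ _,
    by rw [lift_compHom]; exact S.comp_eq_of_eq_unit_right (by simp) _⟩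

theorem exists_rightInverse : ∃ i : G.C1 ⟶ G.C1, i ≫ G.d = G.c ∧ i ≫ G.c = G.d ∧
    ∀ {Z : C} (a : Z ⟶ G.C1) (h : a ≫ G.c = (a ≫ i) ≫ G.d),
      S.comp a (a ≫ i) h = a ≫ G.d ≫ G.e := by
  obtain ⟨σ, hσ₁, hσ₂⟩ := (MaltsevCat.refl_is_equiv _ S.prefixRel_reflexive).1
  let s : G.C1 ⟶ pullback G.c G.d := pullback.lift (G.d ≫ G.e) (𝟙 G.C1) (by simp [G.ec]) ≫ σ
  have hs_fst : s ≫ pullback.fst _ _ = 𝟙 G.C1 := by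
    simp only [s, Category.assoc, hσ₁, lift_compHom]
    exact S.comp_eq_of_eq_unit_left (by simp) _
  have hs_compHom : s ≫ S.compHom = G.d ≫ G.e := by
    simp only [s, Category.assoc, hσ₂, pullback.lift_fst]
  refine ⟨s ≫ pullback.snd _ _, ?_, ?_, fun a h => ?_⟩
  · rw [Category.assoc, ← pullback.condition, ← Category.assoc, hs_fst, Category.id_comp]
  · rw [Category.assoc, ← S.comp_c _ _ pullback.condition, ← compHom, ← Category.assoc,
      hs_compHom, Category.assoc, G.ec, Category.comp_id]
  · calc S.comp a (a ≫ s ≫ pullback.snd _ _) h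
        = S.comp ((a ≫ s) ≫ pullback.fst _ _) ((a ≫ s) ≫ pullback.snd _ _)
          (by simp [pullback.condition]) :=
          S.comp_congr (by simp [hs_fst]) (Category.assoc _ _ _).symm _ _
      _ = a ≫ G.d ≫ G.e := by rw [← comp_compHom, Category.assoc, hs_compHom]

end Composable

end CatStruct

/-- In a Mal'tsev category, every internal category is an internal
groupoid. -/
theorem stmt2 {C : Type u} [Category.{v} C] [HasFiniteLimits C] [MaltsevCat C]
    (G : ReflexiveGraph C) (S : CatStruct G) : S.HasInverses := by
  obtain ⟨i, hd, hc, hr⟩ := S.exists_rightInverse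
  exact S.hasInverses_of_rightInverse hd hc hr
end

section
/- In a Mal'tsev category, any morphism of reflexive graphs between the underlying reflexive graphs of two internal groupoids is automatically an internal functor (preserves composition). -/
open CategoryTheory CategoryTheory.Limits

universe v u v' u'

variable {C : Type u} [Category.{v} C]

/-- In a Mal'tsev category (with finite limits), every internal relation is
difunctional. -/
lemma RelOn.difunctional {C : Type u} [Category.{v} C] [HasFiniteLimits C] [MaltsevCat C]
    {X : C} (rho : RelOn X) {Z : C} (u v w : Z ⟶ rho.R)
    (huv : u ≫ rho.r2 = v ≫ rho.r2) (hvw : v ≫ rho.r1 = w ≫ rho.r1) :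
    ∃ t : Z ⟶ rho.R, t ≫ rho.r1 = u ≫ rho.r1 ∧ t ≫ rho.r2 = w ≫ rho.r2 := by
  -- Build the reflexive relation Σ on rho.R :  A Σ B ↔ ∃ W, W r1 = A r1 ∧ W r2 = B r2.
  -- Q = pairs (A, W) with A r1 = W r1 ; Sg = triples ((A,W),B) with W r2 = B r2.
  let Q : C := pullback rho.r1 rho.r1
  let qA : Q ⟶ rho.R := pullback.fst rho.r1 rho.r1
  let qW : Q ⟶ rho.R := pullback.snd rho.r1 rho.r1
  have qcond : qA ≫ rho.r1 = qW ≫ rho.r1 := pullback.condition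
  let Sg : C := pullback (qW ≫ rho.r2) rho.r2
  let s1 : Sg ⟶ Q := pullback.fst (qW ≫ rho.r2) rho.r2
  let sB : Sg ⟶ rho.R := pullback.snd (qW ≫ rho.r2) rho.r2
  have scond : s1 ≫ (qW ≫ rho.r2) = sB ≫ rho.r2 := pullback.condition
  have jm : ∀ {Z' : C} (f g : Z' ⟶ Sg),
      f ≫ (s1 ≫ qA) = g ≫ (s1 ≫ qA) → f ≫ sB = g ≫ sB → f = g := by
    intro Z' f g h1 h2
    have hW : f ≫ s1 ≫ qW = g ≫ s1 ≫ qW := by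
      apply rho.jmono
      · have : ∀ k : Z' ⟶ Sg, (k ≫ s1 ≫ qW) ≫ rho.r1 = (k ≫ (s1 ≫ qA)) ≫ rho.r1 := by
          intro k
          simp only [Category.assoc, ← qcond]
        rw [this f, this g, h1]
      · have : ∀ k : Z' ⟶ Sg, (k ≫ s1 ≫ qW) ≫ rho.r2 = (k ≫ sB) ≫ rho.r2 := by
          intro k
          have := scond
          simp only [Category.assoc] at this ⊢
          rw [this]
        rw [this f, this g, h2]
    apply pullback.hom_ext
    · apply pullback.hom_ext
      · simpa only [Category.assoc] using h1
      · simpa only [Category.assoc] using hW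
    · exact h2
  let sigma : RelOn rho.R :=
    { R := Sg, r1 := s1 ≫ qA, r2 := sB, jmono := fun f g h1 h2 => jm f g h1 h2 }
  -- auxiliary constructor for elements of Sg
  have mk : ∀ {Z' : C} (A B W : Z' ⟶ rho.R), W ≫ rho.r1 = A ≫ rho.r1 →
      W ≫ rho.r2 = B ≫ rho.r2 →
      ∃ s : Z' ⟶ Sg, s ≫ sigma.r1 = A ∧ s ≫ sigma.r2 = B ∧ s ≫ s1 ≫ qW = W := by
    intro Z' A B W h1 h2
    refine ⟨pullback.lift (pullback.lift A W h1.symm) B ?_, ?_, ?_, ?_⟩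
    · rw [← Category.assoc, pullback.lift_snd, h2]
    · show pullback.lift _ _ _ ≫ (pullback.fst _ _ ≫ pullback.fst _ _) = A
      rw [← Category.assoc, pullback.lift_fst, pullback.lift_fst]
    · exact pullback.lift_snd _ _ _
    · show pullback.lift _ _ _ ≫ (pullback.fst _ _ ≫ pullback.snd _ _) = W
      rw [← Category.assoc, pullback.lift_fst, pullback.lift_snd]
  -- Σ is reflexive
  have hrefl : sigma.Reflexive := by
    obtain ⟨d, hd1, hd2, _⟩ := mk (𝟙 rho.R) (𝟙 rho.R) (𝟙 rho.R) rfl rfl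
    exact ⟨d, by simpa using hd1, by simpa using hd2⟩
  obtain ⟨hsym, htrans⟩ := MaltsevCat.refl_is_equiv sigma hrefl
  -- u Σ v with witness u ; w Σ v with witness v
  obtain ⟨suv, hsuv1, hsuv2, _⟩ := mk u v u rfl huv
  obtain ⟨swv, hswv1, hswv2, _⟩ := mk w v v hvw rfl
  obtain ⟨sy, hsy1, hsy2⟩ := hsym
  -- v Σ w
  have hvw1 : (swv ≫ sy) ≫ sigma.r1 = v := by rw [Category.assoc, hsy1, hswv2]
  have hvw2 : (swv ≫ sy) ≫ sigma.r2 = w := by rw [Category.assoc, hsy2, hswv1]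
  -- transitivity: u Σ w
  obtain ⟨t', ht1, ht2⟩ := htrans suv (swv ≫ sy) (by rw [hsuv2, hvw1])
  refine ⟨t' ≫ s1 ≫ qW, ?_, ?_⟩
  · have : (t' ≫ s1 ≫ qW) ≫ rho.r1 = (t' ≫ sigma.r1) ≫ rho.r1 := by
      show _ = (t' ≫ (s1 ≫ qA)) ≫ rho.r1
      simp only [Category.assoc, ← qcond]
    rw [this, ht1, hsuv1]
  · have : (t' ≫ s1 ≫ qW) ≫ rho.r2 = (t' ≫ sigma.r2) ≫ rho.r2 := by
      show _ = (t' ≫ sB) ≫ rho.r2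
      have := scond
      simp only [Category.assoc] at this ⊢
      rw [this]
    rw [this, ht2, hvw2]

/-- In a Mal'tsev category, any morphism of reflexive graphs between the
underlying reflexive graphs of two internal groupoids preserves composition. -/
theorem stmt3 {C : Type u} [Category.{v} C] [HasFiniteLimits C] [MaltsevCat C]
    (G H : ReflexiveGraph C) (SG : CatStruct G) (SH : CatStruct H)
    (hG : SG.HasInverses) (hH : SH.HasInverses)
    (f0 : G.C0 ⟶ H.C0) (f1 : G.C1 ⟶ H.C1)
    (hd : f1 ≫ H.d = G.d ≫ f0) (hc : f1 ≫ H.c = G.c ≫ f0) (he : G.e ≫ f1 = f0 ≫ H.e) :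
    ∀ {Z : C} (a b : Z ⟶ G.C1) (h : a ≫ G.c = b ≫ G.d)
      (h' : (a ≫ f1) ≫ H.c = (b ≫ f1) ≫ H.d),
      SG.comp a b h ≫ f1 = SH.comp (a ≫ f1) (b ≫ f1) h' := by
  -- congruence lemmas for `comp` (the proof arguments are irrelevant)
  have comp_congrG : ∀ {Z' : C} {a a' b b' : Z' ⟶ G.C1}, a = a' → b = b' →
      ∀ (h0 : a ≫ G.c = b ≫ G.d) (h0' : a' ≫ G.c = b' ≫ G.d),
      SG.comp a b h0 = SG.comp a' b' h0' := by
    intro Z' a a' b b' ha hb h0 h0'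
    subst ha; subst hb; rfl
  have comp_congrH : ∀ {Z' : C} {a a' b b' : Z' ⟶ H.C1}, a = a' → b = b' →
      ∀ (h0 : a ≫ H.c = b ≫ H.d) (h0' : a' ≫ H.c = b' ≫ H.d),
      SH.comp a b h0 = SH.comp a' b' h0' := by
    intro Z' a a' b b' ha hb h0 h0'
    subst ha; subst hb; rfl
  -- f1 maps c-units to c-units and d-units to d-units
  have hce : G.c ≫ G.e ≫ f1 = f1 ≫ H.c ≫ H.e := by
    rw [← Category.assoc f1, hc, Category.assoc, ← he]
  have hde : G.d ≫ G.e ≫ f1 = f1 ≫ H.d ≫ H.e := by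
    rw [← Category.assoc f1, hd, Category.assoc, ← he]
  -- the object of composable pairs
  let P : C := pullback G.c G.d
  let p1 : P ⟶ G.C1 := pullback.fst G.c G.d
  let p2 : P ⟶ G.C1 := pullback.snd G.c G.d
  have cond : p1 ≫ G.c = p2 ≫ G.d := pullback.condition
  have cond' : (p1 ≫ f1) ≫ H.c = (p2 ≫ f1) ≫ H.d := by
    rw [Category.assoc, hc, Category.assoc, hd, ← Category.assoc, cond, Category.assoc]
  -- the two ways to compose-and-map
  let U : P ⟶ H.C1 := SG.comp p1 p2 cond ≫ f1
  let Wm : P ⟶ H.C1 := SH.comp (p1 ≫ f1) (p2 ≫ f1) cond'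
  let E : C := equalizer U Wm
  let ι : E ⟶ P := equalizer.ι U Wm
  have hιUW : ι ≫ U = ι ≫ Wm := equalizer.condition U Wm
  let e1 : E ⟶ G.C1 := ι ≫ p1
  let e2 : E ⟶ G.C1 := ι ≫ p2
  -- E is a relation on G.C1
  have Ejm : ∀ {Z' : C} (fE gE : Z' ⟶ E), fE ≫ e1 = gE ≫ e1 → fE ≫ e2 = gE ≫ e2 →
      fE = gE := by
    intro Z' fE gE h1 h2
    have : fE ≫ ι = gE ≫ ι := by
      apply pullback.hom_ext
      · simpa only [Category.assoc] using h1
      · simpa only [Category.assoc] using h2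
    have hmono : Mono ι := inferInstance
    exact hmono.right_cancellation _ _ this
  let rho : RelOn G.C1 := { R := E, r1 := e1, r2 := e2, jmono := fun f g h1 h2 => Ejm f g h1 h2 }
  -- generic computation of `≫ U` and `≫ Wm` through a lift
  have liftU : ∀ {Z' : C} (x y : Z' ⟶ G.C1) (hxy : x ≫ G.c = y ≫ G.d),
      pullback.lift x y hxy ≫ U = SG.comp x y hxy ≫ f1 := by
    intro Z' x y hxy
    show pullback.lift x y hxy ≫ (SG.comp p1 p2 cond ≫ f1) = _
    rw [← Category.assoc, SG.comp_natural (pullback.lift x y hxy) p1 p2 cond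
      (by rw [Category.assoc, Category.assoc, cond])]
    congr 1
    exact comp_congrG (pullback.lift_fst _ _ _) (pullback.lift_snd _ _ _) _ _
  have liftW : ∀ {Z' : C} (x y : Z' ⟶ G.C1) (hxy : x ≫ G.c = y ≫ G.d)
      (hxy' : (x ≫ f1) ≫ H.c = (y ≫ f1) ≫ H.d),
      pullback.lift x y hxy ≫ Wm = SH.comp (x ≫ f1) (y ≫ f1) hxy' := by
    intro Z' x y hxy hxy'
    show pullback.lift x y hxy ≫ SH.comp (p1 ≫ f1) (p2 ≫ f1) cond' = _
    rw [SH.comp_natural (pullback.lift x y hxy) (p1 ≫ f1) (p2 ≫ f1) cond'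
      (by simp only [Category.assoc]
          rw [hc, hd, ← Category.assoc p1 G.c, cond, Category.assoc])]
    refine comp_congrH ?_ ?_ _ _
    · rw [← Category.assoc, pullback.lift_fst]
    · rw [← Category.assoc, pullback.lift_snd]
  -- membership: pairs (x, x·c·e) are in E
  have mkL : ∀ {Z' : C} (x : Z' ⟶ G.C1), ∃ lx : Z' ⟶ E,
      lx ≫ e1 = x ∧ lx ≫ e2 = x ≫ G.c ≫ G.e := by
    intro Z' x
    have hcomp : x ≫ G.c = (x ≫ G.c ≫ G.e) ≫ G.d := by
      simp only [Category.assoc]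
      rw [G.ed, Category.comp_id]
    have hUx : pullback.lift x (x ≫ G.c ≫ G.e) hcomp ≫ U = x ≫ f1 := by
      rw [liftU]
      rw [SG.comp_unit_r x hcomp]
    have hWx : pullback.lift x (x ≫ G.c ≫ G.e) hcomp ≫ Wm = x ≫ f1 := by
      have harg : (x ≫ G.c ≫ G.e) ≫ f1 = (x ≫ f1) ≫ H.c ≫ H.e := by
        simp only [Category.assoc]
        rw [hce]
      have h2 : (x ≫ f1) ≫ H.c = ((x ≫ f1) ≫ H.c ≫ H.e) ≫ H.d := by
        simp only [Category.assoc]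
        rw [H.ed, Category.comp_id]
      have hxy' : (x ≫ f1) ≫ H.c = ((x ≫ G.c ≫ G.e) ≫ f1) ≫ H.d := by
        rw [harg]
        exact h2
      calc pullback.lift x (x ≫ G.c ≫ G.e) hcomp ≫ Wm
          = SH.comp (x ≫ f1) ((x ≫ G.c ≫ G.e) ≫ f1) hxy' := liftW _ _ _ _
        _ = SH.comp (x ≫ f1) ((x ≫ f1) ≫ H.c ≫ H.e) h2 := comp_congrH rfl harg _ _
        _ = x ≫ f1 := SH.comp_unit_r _ _
    refine ⟨equalizer.lift (pullback.lift x (x ≫ G.c ≫ G.e) hcomp) (hUx.trans hWx.symm),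
      ?_, ?_⟩
    · show _ ≫ (ι ≫ p1) = x
      rw [← Category.assoc, equalizer.lift_ι, pullback.lift_fst]
    · show _ ≫ (ι ≫ p2) = x ≫ G.c ≫ G.e
      rw [← Category.assoc, equalizer.lift_ι, pullback.lift_snd]
  -- membership: pairs (x·d·e, x) are in E
  have mkR : ∀ {Z' : C} (x : Z' ⟶ G.C1), ∃ rx : Z' ⟶ E,
      rx ≫ e1 = x ≫ G.d ≫ G.e ∧ rx ≫ e2 = x := by
    intro Z' x
    have hcomp : (x ≫ G.d ≫ G.e) ≫ G.c = x ≫ G.d := by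
      simp only [Category.assoc]
      rw [G.ec, Category.comp_id]
    have hUx : pullback.lift (x ≫ G.d ≫ G.e) x hcomp ≫ U = x ≫ f1 := by
      rw [liftU]
      rw [SG.comp_unit_l x hcomp]
    have hWx : pullback.lift (x ≫ G.d ≫ G.e) x hcomp ≫ Wm = x ≫ f1 := by
      have harg : (x ≫ G.d ≫ G.e) ≫ f1 = (x ≫ f1) ≫ H.d ≫ H.e := by
        simp only [Category.assoc]
        rw [hde]
      have h2 : ((x ≫ f1) ≫ H.d ≫ H.e) ≫ H.c = (x ≫ f1) ≫ H.d := by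
        simp only [Category.assoc]
        rw [H.ec, Category.comp_id]
      have hxy' : ((x ≫ G.d ≫ G.e) ≫ f1) ≫ H.c = (x ≫ f1) ≫ H.d := by
        rw [harg]
        exact h2
      calc pullback.lift (x ≫ G.d ≫ G.e) x hcomp ≫ Wm
          = SH.comp ((x ≫ G.d ≫ G.e) ≫ f1) (x ≫ f1) hxy' := liftW _ _ _ _
        _ = SH.comp ((x ≫ f1) ≫ H.d ≫ H.e) (x ≫ f1) h2 := comp_congrH harg rfl _ _
        _ = x ≫ f1 := SH.comp_unit_l _ _
    refine ⟨equalizer.lift (pullback.lift (x ≫ G.d ≫ G.e) x hcomp) (hUx.trans hWx.symm),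
      ?_, ?_⟩
    · show _ ≫ (ι ≫ p1) = x ≫ G.d ≫ G.e
      rw [← Category.assoc, equalizer.lift_ι, pullback.lift_fst]
    · show _ ≫ (ι ≫ p2) = x
      rw [← Category.assoc, equalizer.lift_ι, pullback.lift_snd]
  -- now the main argument
  intro Z a b h h'
  obtain ⟨al, hal1, hal2⟩ := mkL a
  obtain ⟨bt, hbt1, hbt2⟩ := mkL (a ≫ G.c ≫ G.e)
  have hbt2' : bt ≫ e2 = a ≫ G.c ≫ G.e := by
    rw [hbt2]
    simp only [Category.assoc]
    rw [← Category.assoc G.e G.c, G.ec, Category.id_comp]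
  obtain ⟨ga, hga1, hga2⟩ := mkR b
  have hga1' : ga ≫ e1 = a ≫ G.c ≫ G.e := by
    rw [hga1, ← Category.assoc, ← h, Category.assoc]
  -- difunctionality of rho : a ρ (ace), (ace) ρ (ace), (ace) ρ b  ⇒  a ρ b
  obtain ⟨t, ht1, ht2⟩ := rho.difunctional al bt ga
    (show al ≫ e2 = bt ≫ e2 from hal2.trans hbt2'.symm)
    (show bt ≫ e1 = ga ≫ e1 from hbt1.trans hga1'.symm)
  rw [hal1] at ht1
  rw [hga2] at ht2
  -- t gives an element of E over the pair (a, b)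
  have hlift : t ≫ ι = pullback.lift a b h := by
    apply pullback.hom_ext
    · rw [Category.assoc, pullback.lift_fst]
      exact ht1
    · rw [Category.assoc, pullback.lift_snd]
      exact ht2
  have key : pullback.lift a b h ≫ U = pullback.lift a b h ≫ Wm := by
    rw [← hlift, Category.assoc, Category.assoc, hιUW]
  rw [liftU a b h] at key
  rw [liftW a b h h'] at key
  exact key
end

section
/- A regular epi-reflective subcategory of a regular Mal'tsev category is again a regular Mal'tsev category. -/
open CategoryTheory CategoryTheory.Limits

universe v u v' u'

variable {C : Type u} [Category.{v} C]

/-!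
The inclusion `ι` of a reflective subcategory is a fully faithful right adjoint, so it preserves
and reflects limits and jointly monic pairs; this transfers finite limits and the Mal'tsev
property, and the reflection of a coequalizer formed in `C` is a coequalizer in the subcategory.

Since the units are regular epimorphisms, a unit that is also mono is an isomorphism, so the
subcategory is closed under subobjects. Hence for a regular epimorphism `f` of the subcategory the
image of `ι f` in `C` lies in the subcategory; as `f` is a strong epimorphism there, the image
inclusion is an isomorphism and `ι f` is regular in `C`. So `ι` preserves and reflects regular
epimorphisms, and their pullback-stability descends from `C`.
-/

instance RegularCat.regular [RegularCat C] : Regular C where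
  toHasFiniteLimits := RegularCat.hasFiniteLimits
  hasCoequalizer_of_isKernelPair {_ _ _ f g₁ g₂} h :=
    RegularCat.hasCoeqOfKernelPair f g₁ g₂ h.w ⟨h.isLimit⟩
  regularEpiIsStableUnderBaseChange := ⟨fun {_ _ _ _ f g f' g'} sq hg =>
    ⟨RegularCat.regEpiStable g f f' g' sq.w ⟨sq.isLimit⟩ hg.regularEpi⟩⟩

theorem RegularCat.of_regular [Regular C] : RegularCat C where
  hasFiniteLimits := inferInstance
  hasCoeqOfKernelPair f _ _ _ hl :=
    Regular.hasCoequalizer_of_isKernelPair (f := f) (IsPullback.of_isLimit hl.some)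
  regEpiStable _ _ _ _ _ hl hf :=
    (Regular.regularEpiIsStableUnderBaseChange.of_isPullback (IsPullback.of_isLimit hl.some)
      ⟨hf⟩).regularEpi

variable {D : Type u'} [Category.{v'} D]

def RelOn.map (G : D ⥤ C) [G.IsRightAdjoint] {X : D} (ρ : RelOn X) : RelOn (G.obj X) where
  R := G.obj ρ.R
  r1 := G.map ρ.r1
  r2 := G.map ρ.r2
  jmono f g h1 h2 := by
    let adj := Adjunction.ofIsRightAdjoint G
    apply (adj.homEquiv _ _).symm.injective
    apply ρ.jmono <;>
      rw [← adj.homEquiv_naturality_right_symm, ← adj.homEquiv_naturality_right_symm]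
    exacts [congrArg _ h1, congrArg _ h2]

theorem MaltsevCat.of_reflective (i : D ⥤ C) [Reflective i] [MaltsevCat C] : MaltsevCat D where
  refl_is_equiv {X} ρ := by
    rintro ⟨δ, hδ1, hδ2⟩
    obtain ⟨⟨σ, hσ1, hσ2⟩, htrans⟩ := MaltsevCat.refl_is_equiv (ρ.map i)
      ⟨i.map δ, by simp [RelOn.map, ← i.map_comp, hδ1],
        by simp [RelOn.map, ← i.map_comp, hδ2]⟩
    obtain ⟨σ, rfl⟩ := i.map_surjective σ
    refine ⟨⟨σ, i.map_injective (by rwa [i.map_comp]),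
      i.map_injective (by rwa [i.map_comp])⟩, fun a b hab => ?_⟩
    obtain ⟨t, ht1, ht2⟩ :=
      htrans (i.map a) (i.map b) (by simp only [RelOn.map, ← i.map_comp, hab])
    obtain ⟨t, rfl⟩ := i.map_surjective t
    exact ⟨t, i.map_injective (by simpa [RelOn.map] using ht1),
      i.map_injective (by simpa [RelOn.map] using ht2)⟩

theorem hasColimit_of_reflective {J : Type*} [Category J] (F : J ⥤ D) (i : D ⥤ C) [Reflective i]
    [HasColimit (F ⋙ i)] : HasColimit F :=
  HasColimit.mk ⟨_, (IsColimit.precomposeInvEquiv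
    (Functor.isoWhiskerLeft F (asIso (reflectorAdjunction i).counit) ≪≫ F.rightUnitor) _).symm
    (isColimitOfPreserves (reflector i) (colimit.isColimit (F ⋙ i)))⟩

theorem isRegularEpi_of_isRegularEpi_map (i : D ⥤ C) [i.Full] [i.Faithful] {A B : D}
    (f : A ⟶ B) [HasPullback f f] [PreservesLimit (cospan f f) i] [IsRegularEpi (i.map f)] :
    IsRegularEpi f :=
  isRegularEpi_of_regularEpi <| regularEpiOfKernelPair f <| isColimitOfIsColimitCoforkMap i _ <|
    isColimitCoforkOfEffectiveEpi (i.map f) _ ((IsPullback.of_hasPullback f f).map i).isLimit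

namespace CategoryTheory.ObjectProperty

variable (P : ObjectProperty C)

theorem isClosedUnderSubobjects_of_isRegularEpi_unit [Reflective P.ι]
    (hrep : ∀ {A B : C}, P A → (A ≅ B) → P B)
    (hunit : ∀ X : C, IsRegularEpi ((reflectorAdjunction P.ι).unit.app X)) :
    P.IsClosedUnderSubobjects where
  prop_of_mono {K M} m _ hM := by
    let adj := reflectorAdjunction P.ι
    have : Mono (adj.unit.app K) := by
      have : adj.unit.app K ≫ P.ι.map ((adj.homEquiv K ⟨M, hM⟩).symm m) = m :=
        (adj.homEquiv_unit _ _ _).symm.trans (Equiv.apply_symm_apply _ _)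
      exact mono_of_mono_fac this
    have : IsIso (adj.unit.app K) := isIso_of_regularEpi_of_mono _ (hunit K).regularEpi.some
    exact hrep ((reflector P.ι).obj K).property (asIso (adj.unit.app K)).symm

theorem isRegularEpi_ι_map [Regular C] [P.IsClosedUnderSubobjects] {A B : P.FullSubcategory}
    (f : A ⟶ B) [IsRegularEpi f] : IsRegularEpi (P.ι.map f) := by
  let F := Regular.strongEpiMonoFactorisation (P.ι.map f)
  let I : P.FullSubcategory := ⟨F.I, P.prop_of_mono F.m B.property⟩
  let e : A ⟶ I := homMk F.e
  let m : I ⟶ B := homMk F.m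
  have hfac : e ≫ m = f := hom_ext _ F.fac
  have : Mono m := P.ι.mono_of_mono_map F.m_mono
  have : StrongEpi (e ≫ m) := by rw [hfac]; infer_instance
  have : StrongEpi m := strongEpi_of_strongEpi e m
  have : IsIso m := isIso_of_mono_of_strongEpi m
  have : IsIso F.m := inferInstanceAs (IsIso (P.ι.map m))
  rw [← F.fac]
  exact MorphismProperty.RespectsIso.postcomp (.regularEpi C) F.m F.e
    (inferInstanceAs (IsRegularEpi F.e))

instance regular_fullSubcategory [Reflective P.ι] [Regular C] [P.IsClosedUnderSubobjects] :
    Regular P.FullSubcategory :=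
  have : HasFiniteLimits P.FullSubcategory := ⟨fun _ _ _ => hasLimitsOfShape_of_reflective P.ι⟩
  { hasCoequalizer_of_isKernelPair := fun {_ _ _ f g₁ g₂} h => by
      have : HasCoequalizer (P.ι.map g₁) (P.ι.map g₂) :=
        Regular.hasCoequalizer_of_isKernelPair (f := P.ι.map f) (P.ι.map_isPullback h)
      have : HasColimit (parallelPair g₁ g₂ ⋙ P.ι) :=
        hasColimit_of_iso (F := parallelPair (P.ι.map g₁) (P.ι.map g₂))
          (diagramIsoParallelPair _)
      exact hasColimit_of_reflective _ P.ι
    regularEpiIsStableUnderBaseChange := ⟨fun {_ _ _ _ f g f' g'} sq hg => by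
      have : IsRegularEpi g := hg
      have hιg := P.isRegularEpi_ι_map g
      have : IsRegularEpi (P.ι.map g') :=
        Regular.regularEpiIsStableUnderBaseChange.of_isPullback (P.ι.map_isPullback sq) hιg
      exact isRegularEpi_of_isRegularEpi_map P.ι g'⟩ }

end CategoryTheory.ObjectProperty

/-- A regular epi-reflective subcategory of a regular Mal'tsev category
is again a regular Mal'tsev category. -/
theorem stmt5 {C : Type u} [Category.{v} C] [RegularCat C] [MaltsevCat C]
    (P : C → Prop) [Reflective (ObjectProperty.ι P)]
    (hrep : ∀ {A B : C}, P A → (A ≅ B) → P B)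
    (hunit : ∀ X : C,
      Nonempty (RegularEpi ((reflectorAdjunction (ObjectProperty.ι P)).unit.app X))) :
    RegularCat (ObjectProperty.FullSubcategory P) ∧ MaltsevCat (ObjectProperty.FullSubcategory P) := by
  have := ObjectProperty.isClosedUnderSubobjects_of_isRegularEpi_unit P hrep fun X => ⟨hunit X⟩
  exact ⟨RegularCat.of_regular, MaltsevCat.of_reflective (ObjectProperty.ι P)⟩
end

section
/- Let q : X → Y be a regular epimorphism and δ : X → S an arbitrary morphism in a category C with kernel pairs and coequalizers. Form the kernel pair (Eq(q), q1, q2) of q and the coequalizer c : S → C of δ∘q1 and δ∘q2; let δ̄ : Y → C be the unique morphism with δ̄∘q = c∘δ. Then the resulting commutative square (with sides q, δ, c, δ̄) is a pushout of q along δ. -/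
open CategoryTheory CategoryTheory.Limits

universe v u v' u'

variable {C : Type u} [Category.{v} C]

/-! A cocone `(inl, inr)` under the span `Y ←q– X –δ→ S` makes `inr` coequalize `q₁ ≫ δ` and
`q₂ ≫ δ`, so it factors uniquely through `c`; the factorization also works for `inl` because `q`
is epi. -/

section PushoutAlongEpi

variable {X Y S K P W : C} {q : X ⟶ Y} {δ : X ⟶ S} {q1 q2 : K ⟶ X}

lemma comp_inr_eq_of_comp_eq (hk : q1 ≫ q = q2 ≫ q) {inl : Y ⟶ W} {inr : S ⟶ W}
    (w : q ≫ inl = δ ≫ inr) : (q1 ≫ δ) ≫ inr = (q2 ≫ δ) ≫ inr := by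
  simp only [Category.assoc, ← w, reassoc_of% hk]

theorem isPushout_of_epi_of_isColimit_cofork [Epi q] (hk : q1 ≫ q = q2 ≫ q) {c : S ⟶ P}
    (hcw : (q1 ≫ δ) ≫ c = (q2 ≫ δ) ≫ c) (hc : IsColimit (Cofork.ofπ c hcw))
    {δbar : Y ⟶ P} (h : q ≫ δbar = δ ≫ c) : IsPushout q δ δbar c := by
  have : Epi c := Cofork.IsColimit.epi hc
  let desc (s : PushoutCocone q δ) : P ⟶ s.pt :=
    Cofork.IsColimit.desc hc s.inr (comp_inr_eq_of_comp_eq hk s.condition)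
  have c_desc (s : PushoutCocone q δ) : c ≫ desc s = s.inr := Cofork.IsColimit.π_desc' hc _ _
  refine IsPushout.of_isColimit (c := PushoutCocone.mk δbar c h) <|
    PushoutCocone.IsColimit.mk h desc (fun s => ?_) c_desc
      (fun s m _ hm => by rw [← cancel_epi c, hm, c_desc])
  rw [← cancel_epi q, reassoc_of% h, c_desc, s.condition]

end PushoutAlongEpi

theorem stmt8_general {C : Type u} [Category.{v} C] {X Y S : C} (q : X ⟶ Y) (δ : X ⟶ S)
    (hq : Nonempty (RegularEpi q))
    {K : C} (q1 q2 : K ⟶ X) (hk : q1 ≫ q = q2 ≫ q)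
    {Cc : C} (c : S ⟶ Cc) (hcw : (q1 ≫ δ) ≫ c = (q2 ≫ δ) ≫ c)
    (hcoeq : Nonempty (IsColimit (Cofork.ofπ c hcw)))
    (δbar : Y ⟶ Cc) (h : q ≫ δbar = δ ≫ c) :
    IsPushout q δ δbar c := by
  obtain ⟨hq⟩ := hq
  obtain ⟨hcoeq⟩ := hcoeq
  have : Epi q := RegularEpi.epi q hq
  exact isPushout_of_epi_of_isColimit_cofork hk hcw hcoeq h

/-- The construction of the pushout of a regular epimorphism `q` along an
arbitrary morphism `δ`, via the coequalizer of `δ ∘ q₁` and `δ ∘ q₂` where `(q₁, q₂)`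
is the kernel pair of `q`. -/
theorem stmt8 {C : Type u} [Category.{v} C] {X Y S : C} (q : X ⟶ Y) (δ : X ⟶ S)
    (hq : Nonempty (RegularEpi q))
    {K : C} (q1 q2 : K ⟶ X) (hk : q1 ≫ q = q2 ≫ q)
    (hkp : Nonempty (IsLimit (PullbackCone.mk q1 q2 hk)))
    {Cc : C} (c : S ⟶ Cc) (hcw : (q1 ≫ δ) ≫ c = (q2 ≫ δ) ≫ c)
    (hcoeq : Nonempty (IsColimit (Cofork.ofπ c hcw)))
    (δbar : Y ⟶ Cc) (h : q ≫ δbar = δ ≫ c) :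
    IsPushout q δ δbar c :=
  stmt8_general q δ hq q1 q2 hk c hcw hcoeq δbar h
end

section
/- In the pushout of a regular epimorphism q : X → Y along a split monomorphism δ : X → S with retraction f : S → X (f∘δ = id_X), the induced morphism δ̄ : Y → C is a split monomorphism: there is a unique morphism f̄ : C → Y with f̄∘δ̄ = id_Y and f̄∘c = q∘f, where c : S → C is the pushout injection. -/
open CategoryTheory CategoryTheory.Limits

universe v u v' u'

variable {C : Type u} [Category.{v} C]

lemma comp_retraction_comp_eq_of_comp_eq {X Y S K : C} {q : X ⟶ Y} {δ : X ⟶ S} {f : S ⟶ X}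
    (hf : δ ≫ f = 𝟙 X) {q1 q2 : K ⟶ X} (hk : q1 ≫ q = q2 ≫ q) :
    (q1 ≫ δ) ≫ f ≫ q = (q2 ≫ δ) ≫ f ≫ q := by
  simpa only [Category.assoc, reassoc_of% hf] using hk

lemma CategoryTheory.CommSq.comp_eq_id_of_epi {X Y S P : C} {q : X ⟶ Y} {δ : X ⟶ S} {δbar : Y ⟶ P}
    {c : S ⟶ P} (sq : CommSq q δ δbar c) [Epi q] {f : S ⟶ X} (hf : δ ≫ f = 𝟙 X)
    {fbar : P ⟶ Y} (hfbar : c ≫ fbar = f ≫ q) : δbar ≫ fbar = 𝟙 Y := by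
  rw [← cancel_epi q, reassoc_of% sq.w, hfbar, reassoc_of% hf, Category.comp_id]

theorem stmt9_general {C : Type u} [Category.{v} C] {X Y S : C} (q : X ⟶ Y) (δ : X ⟶ S)
    (hq : Nonempty (RegularEpi q))
    (f : S ⟶ X) (hf : δ ≫ f = 𝟙 X)
    {K : C} (q1 q2 : K ⟶ X) (hk : q1 ≫ q = q2 ≫ q)
    {Cc : C} (c : S ⟶ Cc) (hcw : (q1 ≫ δ) ≫ c = (q2 ≫ δ) ≫ c)
    (hcoeq : Nonempty (IsColimit (Cofork.ofπ c hcw)))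
    (δbar : Y ⟶ Cc) (h : q ≫ δbar = δ ≫ c) :
    ∃! fbar : Cc ⟶ Y, δbar ≫ fbar = 𝟙 Y ∧ c ≫ fbar = f ≫ q := by
  obtain ⟨hcoeq⟩ := hcoeq
  have : Epi q := RegularEpi.epi q hq.some
  obtain ⟨fbar, hfbar, huniq⟩ :=
    Cofork.IsColimit.existsUnique hcoeq (f ≫ q) (comp_retraction_comp_eq_of_comp_eq hf hk)
  exact ⟨fbar, ⟨(CommSq.mk h).comp_eq_id_of_epi hf hfbar, hfbar⟩, fun g hg => huniq g hg.2⟩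

/-- In the pushout of a regular epimorphism along a split monomorphism,
the induced morphism is a split monomorphism, with a unique retraction compatible with
the given one. -/
theorem stmt9 {C : Type u} [Category.{v} C] {X Y S : C} (q : X ⟶ Y) (δ : X ⟶ S)
    (hq : Nonempty (RegularEpi q))
    (f : S ⟶ X) (hf : δ ≫ f = 𝟙 X)
    {K : C} (q1 q2 : K ⟶ X) (hk : q1 ≫ q = q2 ≫ q)
    (hkp : Nonempty (IsLimit (PullbackCone.mk q1 q2 hk)))
    {Cc : C} (c : S ⟶ Cc) (hcw : (q1 ≫ δ) ≫ c = (q2 ≫ δ) ≫ c)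
    (hcoeq : Nonempty (IsColimit (Cofork.ofπ c hcw)))
    (δbar : Y ⟶ Cc) (h : q ≫ δbar = δ ≫ c) :
    ∃! fbar : Cc ⟶ Y, δbar ≫ fbar = 𝟙 Y ∧ c ≫ fbar = f ≫ q :=
  stmt9_general q δ hq f hf q1 q2 hk c hcw hcoeq δbar h
end
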